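/- For every real θ with 0 ≤ θ ≤ 1/3 and every ε > 0, there exists a weighted digraph D on a finite vertex set with w(D) > 0 such that θ(D) = θ and mac(D) < (1+ε)·l(θ)·w(D). -/

import Mathlib

open scoped BigOperators Classical

noncomputable section

namespace PaperStmt

variable {V : Type*} [Fintype V]

/-- Total weight of a weighted digraph given by `w : V → V → ℝ`. -/
def totalWeight (w : V → V → ℝ) : ℝ := ∑ u, ∑ v, w u v

/-- Weight of the dicut `(X, Xᶜ)`. -/
def cutWeight (w : V → V → ℝ) (X : Finset V) : ℝ := ∑ x ∈ X, ∑ y ∈ Xᶜ, w x y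

/-- Maximum weight of a directed cut. -/
def mac (w : V → V → ℝ) : ℝ :=
  Finset.univ.sup' ⟨∅, Finset.mem_univ ∅⟩ (fun X : Finset V => cutWeight w X)

/-- `r(v) = w⁺(v) - w⁻(v)`. -/
def rv (w : V → V → ℝ) (v : V) : ℝ := (∑ u, w v u) - (∑ u, w u v)

/-- `r⁺(D) = ∑_{v : r(v) > 0} r(v)`. -/
def rPlus (w : V → V → ℝ) : ℝ :=
  ∑ v ∈ Finset.univ.filter (fun v => 0 < rv w v), rv w v

/-- The function `l(θ)` from the paper. -/
def lfun (θ : ℝ) : ℝ := if θ < 1 / 3 then 1 / 4 + θ ^ 2 / (4 * (1 - 2 * θ)) else θ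

def fA (m : ℕ) (v : Fin (2*m)) : ℝ := if (v:ℕ) < m then 1 else 0
def fB (m : ℕ) (v : Fin (2*m)) : ℝ := if (v:ℕ) < m then 0 else 1

def wgt (m : ℕ) (p : ℝ) (u v : Fin (2*m)) : ℝ :=
  if u = v then 0 else
    fA m u * fA m v + fB m u * fB m v + p * (fA m u * fB m v)

lemma wgt_eq (m : ℕ) (p : ℝ) (u v : Fin (2*m)) :
    wgt m p u v = (fA m u * fA m v + fB m u * fB m v + p * (fA m u * fB m v))
      - (if u = v then 1 else 0) := by
  unfold wgt
  split_ifs with h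
  · subst h; unfold fA fB; split_ifs <;> norm_num
  · ring

lemma card_A (m : ℕ) :
    (Finset.univ.filter fun v : Fin (2*m) => (v:ℕ) < m).card = m := by
  rw [Finset.card_filter]
  rw [Fin.sum_univ_eq_sum_range (fun i => if i < m then 1 else 0)]
  rw [← Finset.sum_filter]
  have h : (Finset.range (2*m)).filter (fun i => i < m) = Finset.range m := by
    ext i; simp; omega
  rw [h, Finset.sum_const, Finset.card_range, smul_eq_mul, mul_one]

lemma sum_fA (m : ℕ) : ∑ v, fA m v = m := by
  unfold fA
  rw [Finset.sum_boole, card_A]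

lemma sum_fB (m : ℕ) : ∑ v, fB m v = m := by
  unfold fB
  have h : ∀ v : Fin (2*m), (if (v:ℕ) < m then (0:ℝ) else 1)
      = 1 - (if (v:ℕ) < m then 1 else 0) := by
    intro v; split_ifs <;> norm_num
  simp only [h]
  rw [Finset.sum_sub_distrib, Finset.sum_boole, card_A, Finset.sum_const,
    Finset.card_univ, Fintype.card_fin]
  push_cast; ring



lemma row_sum (m : ℕ) (p : ℝ) (u : Fin (2*m)) :
    ∑ v, wgt m p u v = fA m u * m + (fB m u + p * fA m u) * m - 1 := by
  calc ∑ v, wgt m p u v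
      = ∑ v, (fA m u * fA m v + (fB m u + p * fA m u) * fB m v
          - (if u = v then 1 else 0)) := by
        refine Finset.sum_congr rfl fun v _ => ?_
        rw [wgt_eq]; ring
    _ = fA m u * (∑ v, fA m v) + (fB m u + p * fA m u) * (∑ v, fB m v) - 1 := by
        rw [Finset.sum_sub_distrib, Finset.sum_add_distrib, ← Finset.mul_sum,
          ← Finset.mul_sum]
        simp
    _ = fA m u * m + (fB m u + p * fA m u) * m - 1 := by rw [sum_fA, sum_fB]

lemma col_sum (m : ℕ) (p : ℝ) (v : Fin (2*m)) :
    ∑ u, wgt m p u v = (fA m v + p * fB m v) * m + fB m v * m - 1 := by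
  calc ∑ u, wgt m p u v
      = ∑ u, ((fA m v + p * fB m v) * fA m u + fB m v * fB m u
          - (if u = v then 1 else 0)) := by
        refine Finset.sum_congr rfl fun u _ => ?_
        rw [wgt_eq]; ring
    _ = (fA m v + p * fB m v) * (∑ u, fA m u) + fB m v * (∑ u, fB m u) - 1 := by
        rw [Finset.sum_sub_distrib, Finset.sum_add_distrib, ← Finset.mul_sum,
          ← Finset.mul_sum]
        simp
    _ = (fA m v + p * fB m v) * m + fB m v * m - 1 := by rw [sum_fA, sum_fB]

lemma total_eq (m : ℕ) (p : ℝ) :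
    totalWeight (wgt m p) = 2*(m:ℝ)^2 + p*(m:ℝ)^2 - 2*m := by
  unfold totalWeight
  simp only [row_sum]
  rw [Finset.sum_sub_distrib, Finset.sum_add_distrib, ← Finset.sum_mul, ← Finset.sum_mul]
  rw [Finset.sum_add_distrib, ← Finset.mul_sum, sum_fA, sum_fB, Finset.sum_const,
    Finset.card_univ, Fintype.card_fin, nsmul_eq_mul]
  push_cast; ring

lemma rv_eq (m : ℕ) (p : ℝ) (v : Fin (2*m)) :
    rv (wgt m p) v = p * m * (fA m v - fB m v) := by
  unfold rv
  rw [row_sum, col_sum]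
  have : fA m v + fB m v = 1 := by unfold fA fB; split_ifs <;> norm_num
  nlinarith [this]



lemma cut_eq (m : ℕ) (p : ℝ) (X : Finset (Fin (2*m))) :
    cutWeight (wgt m p) X =
      (∑ x ∈ X, fA m x) * (∑ y ∈ Xᶜ, fA m y)
      + (∑ x ∈ X, fB m x) * (∑ y ∈ Xᶜ, fB m y)
      + p * ((∑ x ∈ X, fA m x) * (∑ y ∈ Xᶜ, fB m y)) := by
  have h2 : ∑ x ∈ X, ∑ y ∈ Xᶜ, wgt m p x y =
      (∑ x ∈ X, fA m x) * (∑ y ∈ Xᶜ, fA m y)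
      + (∑ x ∈ X, fB m x) * (∑ y ∈ Xᶜ, fB m y)
      + p * ((∑ x ∈ X, fA m x) * (∑ y ∈ Xᶜ, fB m y)) := by
    rw [Finset.sum_mul_sum, Finset.sum_mul_sum, Finset.sum_mul_sum]
    simp only [Finset.mul_sum]
    rw [← Finset.sum_add_distrib, ← Finset.sum_add_distrib]
    refine Finset.sum_congr rfl fun x hx => ?_
    rw [← Finset.sum_add_distrib, ← Finset.sum_add_distrib]
    refine Finset.sum_congr rfl fun y hy => ?_
    have hxy : x ≠ y := by
      intro h; subst h
      exact (Finset.mem_compl.mp hy) hx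
    unfold wgt
    rw [if_neg hxy]
  unfold cutWeight
  convert h2 using 3
  ext y
  simp

lemma key_ineq (a b M p : ℝ) (hp0 : 0 ≤ p) (hp1 : p ≤ 1) :
    (2 - p) * (a*(M-a) + b*(M-b) + p*(a*(M-b))) ≤ M^2 := by
  have h2p : (0:ℝ) < 2 - p := by linarith
  have hid : 2*(2-p)*(M^2 - (2-p)*(a*(M-a) + b*(M-b) + p*(a*(M-b))))
      = p*(((2-p)*a - M) + ((2-p)*b - (1-p)*M))^2
        + (2-p)*(((2-p)*a - M)^2 + ((2-p)*b - (1-p)*M)^2) := by ring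
  nlinarith [mul_nonneg hp0 (sq_nonneg (((2-p)*a - M) + ((2-p)*b - (1-p)*M))),
    mul_nonneg h2p.le (sq_nonneg ((2-p)*a - M)),
    mul_nonneg h2p.le (sq_nonneg ((2-p)*b - (1-p)*M)), hid, h2p]

lemma cut_bound (m : ℕ) (p : ℝ) (hp0 : 0 ≤ p) (hp1 : p ≤ 1)
    (X : Finset (Fin (2*m))) :
    (2 - p) * cutWeight (wgt m p) X ≤ (m:ℝ)^2 := by
  have hA : ∑ y ∈ Xᶜ, fA m y = (m:ℝ) - ∑ x ∈ X, fA m x := by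
    have := Finset.sum_add_sum_compl X (fA m)
    rw [sum_fA] at this; linarith
  have hB : ∑ y ∈ Xᶜ, fB m y = (m:ℝ) - ∑ x ∈ X, fB m x := by
    have := Finset.sum_add_sum_compl X (fB m)
    rw [sum_fB] at this; linarith
  rw [cut_eq, hA, hB]
  exact key_ineq _ _ _ _ hp0 hp1

lemma rPlus_eq (m : ℕ) (p : ℝ) (hp0 : 0 ≤ p) :
    rPlus (wgt m p) = p * (m:ℝ)^2 := by
  rcases hp0.eq_or_lt with h | h
  · subst h
    unfold rPlus
    have : ∀ v : Fin (2*m), ¬ (0 < rv (wgt m 0) v) := by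
      intro v
      rw [rv_eq]; simp
    rw [Finset.filter_false_of_mem (fun v _ => this v)]
    simp
  · unfold rPlus
    have hm0 : (0:ℝ) ≤ (m:ℝ) := by positivity
    have hfil : Finset.univ.filter (fun v => 0 < rv (wgt m p) v)
        = Finset.univ.filter (fun v : Fin (2*m) => (v:ℕ) < m) := by
      ext v
      simp only [Finset.mem_filter, Finset.mem_univ, true_and, rv_eq]
      unfold fA fB
      split_ifs with hv
      · simp only [hv, iff_true]
        have hvm : 0 < (m:ℕ) := Nat.pos_of_ne_zero (by omega)
        have : (0:ℝ) < (m:ℝ) := by exact_mod_cast hvm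
        nlinarith
      · simp only [hv, iff_false]
        intro hc
        nlinarith
    rw [hfil]
    have : ∀ v ∈ Finset.univ.filter (fun v : Fin (2*m) => (v:ℕ) < m),
        rv (wgt m p) v = p * m := by
      intro v hv
      rw [Finset.mem_filter] at hv
      rw [rv_eq]
      unfold fA fB
      rw [if_pos hv.2, if_pos hv.2]; ring
    rw [Finset.sum_congr rfl this, Finset.sum_const, card_A, nsmul_eq_mul]
    ring

theorem upper_construction_small_theta :
    ∀ θ : ℝ, 0 ≤ θ → θ ≤ 1 / 3 → ∀ ε : ℝ, 0 < ε →
      ∃ (n : ℕ) (w : Fin n → Fin n → ℝ),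
        (∀ u v, 0 ≤ w u v) ∧ (∀ v, w v v = 0) ∧ 0 < totalWeight w ∧
        rPlus w / totalWeight w = θ ∧
        mac w < (1 + ε) * lfun θ * totalWeight w := by
  intro θ hθ0 hθ1 ε hε
  set m : ℕ := ⌈1/ε⌉₊ + 2 with hm
  set M : ℝ := (m:ℝ) with hM
  have hM2 : (2:ℝ) ≤ M := by
    have h2 : 2 ≤ m := by omega
    rw [hM]; exact_mod_cast h2
  have hMε : 1/ε + 2 ≤ M := by
    have h1 : (1/ε : ℝ) ≤ (⌈1/ε⌉₊ : ℝ) := Nat.le_ceil _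
    have h2 : M = (⌈(1:ℝ)/ε⌉₊ : ℝ) + 2 := by rw [hM, hm]; push_cast; ring
    linarith
  have hq : (0:ℝ) < 1 - θ := by linarith
  have hs : (0:ℝ) < 1 - 2*θ := by linarith
  have hM0 : (0:ℝ) < M := by linarith
  have hMq : (0:ℝ) < M*(1-θ) := by positivity
  set p : ℝ := 2*θ*(M-1)/(M*(1-θ)) with hp
  have hp0 : 0 ≤ p := by
    rw [hp]
    apply div_nonneg _ hMq.le
    nlinarith
  have hp1 : p ≤ 1 := by
    rw [hp, div_le_one hMq]
    nlinarith
  have h2p : (0:ℝ) < 2 - p := by linarith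
  have hW : totalWeight (wgt m p) = 2*M^2 + p*M^2 - 2*M := total_eq m p
  have hWpos : 0 < totalWeight (wgt m p) := by
    rw [hW]
    nlinarith [mul_nonneg hp0 (sq_nonneg M)]
  refine ⟨2*m, wgt m p, ?_, ?_, hWpos, ?_, ?_⟩
  · intro u v
    unfold wgt fA fB
    split_ifs <;> norm_num
    all_goals linarith
  · intro v
    unfold wgt
    simp
  · -- rPlus / totalWeight = θ
    have hkey : p*M^2 = θ * (2*M^2 + p*M^2 - 2*M) := by
      rw [hp]
      field_simp
      ring
    rw [rPlus_eq m p hp0, hW]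
    have hne : 2*M^2+p*M^2-2*M ≠ 0 := by rw [← hW]; exact ne_of_gt hWpos
    rw [show ((m:ℝ)) = M from rfl, div_eq_iff hne]
    exact hkey
  · -- mac bound
    have hmac : mac (wgt m p) ≤ M^2/(2-p) := by
      unfold mac
      apply Finset.sup'_le
      intro X _
      rw [le_div_iff₀ h2p]
      have := cut_bound m p hp0 hp1 X
      rw [show ((m:ℝ)) = M from rfl] at this
      linarith
    have hlf : lfun θ = (1-θ)^2/(4*(1-2*θ)) := by
      unfold lfun
      split_ifs with h
      · have hne : (1:ℝ)-2*θ ≠ 0 := ne_of_gt hs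
        rw [div_add_div _ _ (by norm_num) (by positivity), div_eq_div_iff (by positivity) (by positivity)]
        ring
      · have hθ : θ = 1/3 := le_antisymm hθ1 (not_lt.mp h)
        rw [hθ]; norm_num
    have hWp : 2*M^2+p*M^2-2*M = 2*M*(M-1)/(1-θ) := by
      rw [hp]; field_simp; ring
    have h2pe : 2-p = 2*(M*(1-2*θ)+θ)/(M*(1-θ)) := by
      rw [hp]; field_simp; ring
    have hval : (1-θ)^2/(4*(1-2*θ)) * (2*M*(M-1)/(1-θ))
        * (2*(M*(1-2*θ)+θ)/(M*(1-θ))) = (M-1)*M + (M-1)*θ/(1-2*θ) := by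
      rw [div_mul_div_comm, div_mul_div_comm, add_div' _ _ _ hs.ne', div_eq_div_iff (by positivity) hs.ne']
      ring
    have hfin : M^2/(2-p) < (1+ε) * lfun θ * totalWeight (wgt m p) := by
      rw [hlf, hW, div_lt_iff₀ h2p]
      calc M^2 < (1+ε)*((M-1)*M + (M-1)*θ/(1-2*θ)) := by
            have hnn : 0 ≤ (M-1)*θ/(1-2*θ) :=
              div_nonneg (mul_nonneg (by linarith) hθ0) hs.le
            have hεM : 1 + ε < ε*M := by
              have h1 : ε*(1/ε) = 1 := by field_simp
              nlinarith
            nlinarith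
        _ = (1+ε)*((1-θ)^2/(4*(1-2*θ)) * (2*M*(M-1)/(1-θ))
              * (2*(M*(1-2*θ)+θ)/(M*(1-θ)))) := by rw [hval]
        _ = (1+ε)*((1-θ)^2/(4*(1-2*θ)))*(2*M^2+p*M^2-2*M)*(2-p) := by
              rw [hWp, h2pe]; ring
    exact lt_of_le_of_lt hmac hfin

end PaperStmt
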